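/- Fix α ∈ [0, 2]. Then the series θ(x) = Σ_{n ∈ ℤ} θ_n(x) converges absolutely for every x ∈ ℝ, and sup_{x ∈ ℝ} |θ(x) − θ_{n_x}(x)| < ∞. -/

import Mathlib

open MeasureTheory intervalIntegral

/-- The integer closest to `x`, taking the smaller one when `x` is a half-integer. -/
noncomputable def nearestInt (x : ℝ) : ℤ := ⌈x - 1 / 2⌉

/-- The summand `θ_n(x)`. -/
noncomputable def thetaN (α : ℝ) (n : ℤ) (x : ℝ) : ℝ :=
  if n = 0 then
    (1 / Real.pi) * ∫ t in (-(5/4) : ℝ)..(5/4 : ℝ),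
      (Real.arctan (t + x) - Real.arctan x) / t
  else
    (1 / Real.pi) * ∫ t in (-(5/4) : ℝ)..(5/4 : ℝ),
      (Real.arctan (|(n : ℝ)| ^ α * (t + x - (n : ℝ))) -
        Real.arctan (|(n : ℝ)| ^ α * (x - (n : ℝ)))) / t

/-!
Write `θ_n(x)` as `(1/π) ∫ (arctan (a (t + y)) - arctan (a y)) / t dt` with `y = x - n` and slope
`a = |n|^α ≥ 1`. For `|t| ≤ |y| / 2` both arguments have the sign of `y`, and the subtraction
formula `arctan u - arctan v = arctan ((u - v) / (1 + u v))` bounds the quotient by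
`a / (1 + a² y² / 2) ≤ 2 / y²`; for `|t| > |y| / 2` the crude bound `π / |t|` is `O(1 / y²)`
because the window `|t| ≤ 5/4` is bounded. Hence `|θ_n(x)| = O(1 / (x - n)²)` uniformly in `α ≥ 0`,
and as `|x - n| ≥ |n - n_x| / 2` for `n ≠ n_x`, the series is dominated by a shift of `Σ 50 / k²`.
-/

open Real

namespace Real

lemma abs_arctan_le_abs (z : ℝ) : |arctan z| ≤ |z| := by
  have key : ∀ z : ℝ, 0 ≤ z → arctan z ≤ z := fun z hz => by
    simpa [tan_arctan] using le_tan (arctan_nonneg.2 hz) (arctan_lt_pi_div_two z)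
  rcases le_total 0 z with hz | hz
  · rw [abs_of_nonneg hz, abs_of_nonneg (arctan_nonneg.2 hz)]
    exact key z hz
  · rw [abs_of_nonpos hz, abs_of_nonpos (arctan_le_zero.2 hz), ← arctan_neg]
    exact key _ (neg_nonneg.2 hz)

lemma abs_arctan_sub_lt_pi (u v : ℝ) : |arctan u - arctan v| < π := by
  have hu := arctan_mem_Ioo u
  have hv := arctan_mem_Ioo v
  exact abs_sub_lt_iff.2 ⟨by linarith [hu.2, hv.1], by linarith [hu.1, hv.2]⟩

lemma abs_arctan_sub_le_of_mul_nonneg {u v : ℝ} (h : 0 ≤ u * v) :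
    |arctan u - arctan v| ≤ |u - v| / (1 + u * v) := by
  have hlt : u * -v < 1 := by linarith
  rw [sub_eq_add_neg, ← arctan_neg, arctan_add hlt]
  calc |arctan ((u + -v) / (1 - u * -v))| ≤ |(u + -v) / (1 - u * -v)| := abs_arctan_le_abs _
    _ = |u - v| / (1 + u * v) := by
      rw [abs_div, abs_of_pos (by linarith : 0 < 1 - u * -v), mul_neg, sub_neg_eq_add,
        ← sub_eq_add_neg]

end Real

lemma abs_arctan_diffQuot_le_of_abs_le_half {a y t : ℝ} (ha : 1 ≤ a) (ht : |t| ≤ |y| / 2) :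
    |(arctan (a * (t + y)) - arctan (a * y)) / t| ≤ 2 / y ^ 2 := by
  rcases eq_or_ne t 0 with rfl | ht0
  · rw [div_zero, abs_zero]
    positivity
  have htpos : 0 < |t| := abs_pos.2 ht0
  have hy2 : 0 < y ^ 2 := by rw [← sq_abs]; nlinarith
  have hty : y ^ 2 / 2 ≤ (t + y) * y := by
    have : |t * y| ≤ y ^ 2 / 2 := by rw [abs_mul, ← sq_abs]; nlinarith [abs_nonneg y]
    nlinarith [neg_abs_le (t * y)]
  have huv : a ^ 2 * (y ^ 2 / 2) ≤ a * (t + y) * (a * y) := by nlinarith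
  have ha2 : 0 < a ^ 2 * (y ^ 2 / 2) := by positivity
  calc |(arctan (a * (t + y)) - arctan (a * y)) / t|
      ≤ |a * (t + y) - a * y| / (1 + a * (t + y) * (a * y)) / |t| := by
        rw [abs_div]
        gcongr
        exact abs_arctan_sub_le_of_mul_nonneg (by linarith)
    _ = a / (1 + a * (t + y) * (a * y)) := by
        rw [show a * (t + y) - a * y = a * t by ring, abs_mul, abs_of_pos (by linarith)]
        field_simp
    _ ≤ a / (a ^ 2 * (y ^ 2 / 2)) := by gcongr; linarith
    _ = 2 / (a * y ^ 2) := by field_simp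
    _ ≤ 2 / y ^ 2 := by gcongr; nlinarith

lemma abs_arctan_sub_div_le_of_half_le_abs {u v y t : ℝ} (hy : y ≠ 0) (hyt : |y| ≤ 2 * |t|)
    (ht : |t| ≤ 5 / 4) : |(arctan u - arctan v) / t| ≤ 5 * π / y ^ 2 := by
  have hypos : 0 < |y| := abs_pos.2 hy
  have htpos : 0 < |t| := by linarith
  have hsq : y ^ 2 ≤ 5 * |t| := by rw [← sq_abs]; nlinarith
  rw [abs_div, div_le_div_iff₀ htpos (by positivity)]
  nlinarith [abs_arctan_sub_lt_pi u v, abs_nonneg (arctan u - arctan v), pi_pos]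

lemma abs_arctan_diffQuot_le {a y t : ℝ} (ha : 1 ≤ a) (hy : y ≠ 0) (ht : |t| ≤ 5 / 4) :
    |(arctan (a * (t + y)) - arctan (a * y)) / t| ≤ 5 * π / y ^ 2 := by
  rcases le_total |t| (|y| / 2) with hty | hty
  · refine (abs_arctan_diffQuot_le_of_abs_le_half ha hty).trans ?_
    gcongr
    linarith [pi_gt_three]
  · exact abs_arctan_sub_div_le_of_half_le_abs hy (by linarith) ht

noncomputable def thetaCore (a y : ℝ) : ℝ :=
  (1 / π) * ∫ t in (-(5/4) : ℝ)..(5/4 : ℝ), (arctan (a * (t + y)) - arctan (a * y)) / t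

lemma abs_thetaCore_le {a y : ℝ} (ha : 1 ≤ a) (hy : y ≠ 0) :
    |thetaCore a y| ≤ 25 / (2 * y ^ 2) := by
  have hint : ‖∫ t in (-(5/4) : ℝ)..(5/4 : ℝ), (arctan (a * (t + y)) - arctan (a * y)) / t‖
      ≤ 5 * π / y ^ 2 * |5 / 4 - -(5 / 4)| := by
    refine intervalIntegral.norm_integral_le_of_norm_le_const fun t ht => ?_
    rw [Set.uIoc_of_le (by norm_num)] at ht
    exact abs_arctan_diffQuot_le ha hy (abs_le.2 ⟨ht.1.le, ht.2⟩)
  rw [thetaCore, abs_mul, abs_of_pos (by positivity)]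
  calc 1 / π * |∫ t in (-(5/4) : ℝ)..(5/4 : ℝ), (arctan (a * (t + y)) - arctan (a * y)) / t|
      ≤ 1 / π * (5 * π / y ^ 2 * |5 / 4 - -(5 / 4)|) := by gcongr; exact hint
    _ = 25 / (2 * y ^ 2) := by norm_num; field_simp; ring

lemma thetaN_eq_thetaCore (α : ℝ) (n : ℤ) (x : ℝ) :
    thetaN α n x = thetaCore (if n = 0 then 1 else |(n : ℝ)| ^ α) (x - n) := by
  unfold thetaN thetaCore
  split_ifs with hn
  · subst hn
    simp
  · simp only [add_sub_assoc]

lemma abs_thetaN_le {α x : ℝ} {n : ℤ} (hα : 0 ≤ α) (hx : x ≠ n) :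
    |thetaN α n x| ≤ 25 / (2 * (x - n) ^ 2) := by
  rw [thetaN_eq_thetaCore]
  refine abs_thetaCore_le ?_ (sub_ne_zero.2 hx)
  split_ifs with hn
  · rfl
  · exact one_le_rpow (by exact_mod_cast Int.one_le_abs hn) hα

lemma abs_sub_nearestInt_le (x : ℝ) : |x - nearestInt x| ≤ 1 / 2 := by
  have h1 : x - 1 / 2 ≤ nearestInt x := Int.le_ceil _
  have h2 : (nearestInt x : ℝ) < x - 1 / 2 + 1 := Int.ceil_lt_add_one _
  rw [abs_le]
  constructor <;> linarith

lemma half_le_abs_sub_of_ne_nearestInt {x : ℝ} {n : ℤ} (hn : n ≠ nearestInt x) :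
    1 / 2 ≤ |x - n| := by
  have h1 : x - 1 / 2 ≤ nearestInt x := Int.le_ceil _
  have h2 : (nearestInt x : ℝ) < x - 1 / 2 + 1 := Int.ceil_lt_add_one _
  rcases hn.lt_or_gt with hlt | hlt
  · have : (n : ℝ) + 1 ≤ nearestInt x := by exact_mod_cast hlt
    rw [le_abs]; left; linarith
  · have : (nearestInt x : ℝ) + 1 ≤ n := by exact_mod_cast hlt
    rw [le_abs]; right; linarith

lemma sq_sub_nearestInt_le {x : ℝ} {n : ℤ} (hn : n ≠ nearestInt x) :
    ((n - nearestInt x : ℤ) : ℝ) ^ 2 ≤ 4 * (x - n) ^ 2 := by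
  have hle : |((n - nearestInt x : ℤ) : ℝ)| ≤ 2 * |x - n| := by
    calc |((n - nearestInt x : ℤ) : ℝ)| = |(x - nearestInt x) - (x - n)| := by
          push_cast; ring_nf
      _ ≤ |x - nearestInt x| + |x - n| := abs_sub _ _
      _ ≤ 2 * |x - n| := by
          linarith [abs_sub_nearestInt_le x, half_le_abs_sub_of_ne_nearestInt hn]
  rw [← sq_abs, show 4 * (x - n) ^ 2 = (2 * |x - n|) ^ 2 by rw [mul_pow, sq_abs]; norm_num]
  exact pow_le_pow_left₀ (abs_nonneg _) hle 2

lemma abs_thetaN_le_of_ne_nearestInt {α x : ℝ} {n : ℤ} (hα : 0 ≤ α) (hn : n ≠ nearestInt x) :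
    |thetaN α n x| ≤ 50 / ((n - nearestInt x : ℤ) : ℝ) ^ 2 := by
  have hxn := half_le_abs_sub_of_ne_nearestInt hn
  have hx : x - n ≠ 0 := fun h => by norm_num [h] at hxn
  have hk : ((n - nearestInt x : ℤ) : ℝ) ≠ 0 := by exact_mod_cast sub_ne_zero.2 hn
  refine (abs_thetaN_le hα (sub_ne_zero.1 hx)).trans ?_
  rw [div_le_div_iff₀ (by positivity) (by positivity)]
  nlinarith [sq_sub_nearestInt_le hn]

lemma summable_div_sq_sub (C : ℝ) (m : ℤ) :
    Summable fun n : ℤ => C / ((n - m : ℤ) : ℝ) ^ 2 := by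
  have h := ((summable_one_div_int_pow (p := 2)).2 one_lt_two).mul_left C
  simpa [Function.comp_def, div_eq_mul_inv] using h.comp_injective (sub_left_injective (b := m))

section SummationAgainstInverseSquares

variable {f : ℤ → ℝ} {m : ℤ} {C : ℝ}

lemma summable_abs_of_abs_le_div_sq_sub (hf : ∀ n ≠ m, |f n| ≤ C / ((n - m : ℤ) : ℝ) ^ 2) :
    Summable fun n => |f n| :=
  .of_norm_bounded_eventually (summable_div_sq_sub C m) <| by
    filter_upwards [Filter.eventually_cofinite_ne m] with n hn
    simpa using hf n hn

lemma abs_tsum_sub_le_of_abs_le_div_sq_sub (hf : ∀ n ≠ m, |f n| ≤ C / ((n - m : ℤ) : ℝ) ^ 2) :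
    |∑' n, f n - f m| ≤ ∑' k : ℤ, C / (k : ℝ) ^ 2 := by
  classical
  have hsum : HasSum (fun n : ℤ => C / ((n - m : ℤ) : ℝ) ^ 2) (∑' k : ℤ, C / (k : ℝ) ^ 2) :=
    (Equiv.subRight m).hasSum_iff (f := fun k : ℤ => C / (k : ℝ) ^ 2) |>.2 <| by
      simpa using (summable_div_sq_sub C 0).hasSum
  rw [(summable_abs_of_abs_le_div_sq_sub hf).of_abs.tsum_eq_add_tsum_ite m, add_sub_cancel_left]
  have hle (n : ℤ) : ‖if n = m then 0 else f n‖ ≤ C / ((n - m : ℤ) : ℝ) ^ 2 := by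
    by_cases hn : n = m
    · simp [hn]
    · simpa [hn] using hf n hn
  simpa only [Real.norm_eq_abs] using tsum_of_norm_bounded hsum hle

end SummationAgainstInverseSquares

theorem stmt_16 (α : ℝ) (hα : α ∈ Set.Icc (0:ℝ) 2) :
    (∀ x : ℝ, Summable (fun n : ℤ => |thetaN α n x|)) ∧
    ∃ C : ℝ, ∀ x : ℝ,
      |(∑' n : ℤ, thetaN α n x) - thetaN α (nearestInt x) x| ≤ C := by
  have hbound (x : ℝ) (n : ℤ) (hn : n ≠ nearestInt x) :=
    abs_thetaN_le_of_ne_nearestInt hα.1 hn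
  exact ⟨fun x => summable_abs_of_abs_le_div_sq_sub (hbound x), ∑' k : ℤ, 50 / (k : ℝ) ^ 2,
    fun x => abs_tsum_sub_le_of_abs_le_div_sq_sub (hbound x)⟩
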